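/- arXiv:0706.1617 — 4 statements merged into one kernel-verified Lean document; each statement's English description precedes it below -/
import Mathlib

section
/- For every finite strategic game H and every k ≥ 0, LS^k ⊆ GS^k: the k-th iterate (starting from the full game H) of the local iterated elimination of strategies strictly dominated by a pure strategy is contained in the k-th iterate of the corresponding global elimination operator. -/
open Function

/-- The opponents' part of the joint strategy `t` lies in the restriction `G`. -/
def OppIn {ι : Type*} [DecidableEq ι] {σ : ι → Type*} (G : ∀ i, Set (σ i)) (i : ι) (t : ∀ j, σ j) : Prop :=
  ∀ j, j ≠ i → t j ∈ G j

/-- `s'` strictly dominates `s` on the restriction `G` (pure strategies). -/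
def SDom {ι : Type*} [DecidableEq ι] {σ : ι → Type*} (p : ι → (∀ j, σ j) → ℝ) (G : ∀ i, Set (σ i))
    (i : ι) (s' s : σ i) : Prop :=
  ∀ t : ∀ j, σ j, OppIn G i t → p i (update t i s) < p i (update t i s')

/-- `s'` weakly dominates `s` on the restriction `G` (pure strategies). -/
def WDom {ι : Type*} [DecidableEq ι] {σ : ι → Type*} (p : ι → (∀ j, σ j) → ℝ) (G : ∀ i, Set (σ i))
    (i : ι) (s' s : σ i) : Prop :=
  (∀ t : ∀ j, σ j, OppIn G i t → p i (update t i s) ≤ p i (update t i s')) ∧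
  (∃ t : ∀ j, σ j, OppIn G i t ∧ p i (update t i s) < p i (update t i s'))

/-- Probability distributions over a finite type with support contained in `A`. -/
def Mixed {α : Type*} [Fintype α] (A : Set α) : Set (α → ℝ) :=
  {m | (∀ a, 0 ≤ m a) ∧ ∑ a, m a = 1 ∧ ∀ a, m a ≠ 0 → a ∈ A}

/-- Expected payoff of player `i` using mixed strategy `m` against `t₋ᵢ`. -/
def epay {ι : Type*} [DecidableEq ι] {σ : ι → Type*} [∀ i, Fintype (σ i)]
    (p : ι → (∀ j, σ j) → ℝ) (i : ι) (m : σ i → ℝ) (t : ∀ j, σ j) : ℝ :=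
  ∑ a, m a * p i (update t i a)

/-- The mixed strategy `m` strictly dominates `s` on `G`. -/
def MSDom {ι : Type*} [DecidableEq ι] {σ : ι → Type*} [∀ i, Fintype (σ i)]
    (p : ι → (∀ j, σ j) → ℝ) (G : ∀ i, Set (σ i)) (i : ι) (m : σ i → ℝ) (s : σ i) : Prop :=
  ∀ t : ∀ j, σ j, OppIn G i t → p i (update t i s) < epay p i m t

/-- The mixed strategy `m` weakly dominates `s` on `G`. -/
def MWDom {ι : Type*} [DecidableEq ι] {σ : ι → Type*} [∀ i, Fintype (σ i)]
    (p : ι → (∀ j, σ j) → ℝ) (G : ∀ i, Set (σ i)) (i : ι) (m : σ i → ℝ) (s : σ i) : Prop :=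
  (∀ t : ∀ j, σ j, OppIn G i t → p i (update t i s) ≤ epay p i m t) ∧
  (∃ t : ∀ j, σ j, OppIn G i t ∧ p i (update t i s) < epay p i m t)

/-- Local elimination of strategies strictly dominated by a pure strategy. -/
def LS {ι : Type*} [DecidableEq ι] {σ : ι → Type*} (p : ι → (∀ j, σ j) → ℝ)
    (G : ∀ i, Set (σ i)) : ∀ i, Set (σ i) :=
  fun i => {s | s ∈ G i ∧ ¬ ∃ s' ∈ G i, SDom p G i s' s}

/-- Global elimination of strategies strictly dominated by a pure strategy. -/
def GS {ι : Type*} [DecidableEq ι] {σ : ι → Type*} (p : ι → (∀ j, σ j) → ℝ)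
    (G : ∀ i, Set (σ i)) : ∀ i, Set (σ i) :=
  fun i => {s | s ∈ G i ∧ ¬ ∃ s' : σ i, SDom p G i s' s}

/-- Local elimination of strategies weakly dominated by a pure strategy. -/
def LW {ι : Type*} [DecidableEq ι] {σ : ι → Type*} (p : ι → (∀ j, σ j) → ℝ)
    (G : ∀ i, Set (σ i)) : ∀ i, Set (σ i) :=
  fun i => {s | s ∈ G i ∧ ¬ ∃ s' ∈ G i, WDom p G i s' s}

/-- Global elimination of strategies weakly dominated by a pure strategy. -/
def GW {ι : Type*} [DecidableEq ι] {σ : ι → Type*} (p : ι → (∀ j, σ j) → ℝ)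
    (G : ∀ i, Set (σ i)) : ∀ i, Set (σ i) :=
  fun i => {s | s ∈ G i ∧ ¬ ∃ s' : σ i, WDom p G i s' s}

/-- Local elimination of strategies strictly dominated by a mixed strategy. -/
def MLS {ι : Type*} [DecidableEq ι] {σ : ι → Type*} [∀ i, Fintype (σ i)] (p : ι → (∀ j, σ j) → ℝ)
    (G : ∀ i, Set (σ i)) : ∀ i, Set (σ i) :=
  fun i => {s | s ∈ G i ∧ ¬ ∃ m ∈ Mixed (G i), MSDom p G i m s}

/-- Global elimination of strategies strictly dominated by a mixed strategy. -/
def MGS {ι : Type*} [DecidableEq ι] {σ : ι → Type*} [∀ i, Fintype (σ i)] (p : ι → (∀ j, σ j) → ℝ)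
    (G : ∀ i, Set (σ i)) : ∀ i, Set (σ i) :=
  fun i => {s | s ∈ G i ∧ ¬ ∃ m ∈ Mixed (Set.univ : Set (σ i)), MSDom p G i m s}

/-- Local elimination of strategies weakly dominated by a mixed strategy. -/
def MLW {ι : Type*} [DecidableEq ι] {σ : ι → Type*} [∀ i, Fintype (σ i)] (p : ι → (∀ j, σ j) → ℝ)
    (G : ∀ i, Set (σ i)) : ∀ i, Set (σ i) :=
  fun i => {s | s ∈ G i ∧ ¬ ∃ m ∈ Mixed (G i), MWDom p G i m s}

/-- Global elimination of strategies weakly dominated by a mixed strategy. -/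
def MGW {ι : Type*} [DecidableEq ι] {σ : ι → Type*} [∀ i, Fintype (σ i)] (p : ι → (∀ j, σ j) → ℝ)
    (G : ∀ i, Set (σ i)) : ∀ i, Set (σ i) :=
  fun i => {s | s ∈ G i ∧ ¬ ∃ m ∈ Mixed (Set.univ : Set (σ i)), MWDom p G i m s}

/-!
A strategy that is strictly dominated on a restriction `L` is, by finiteness and transitivity of
strict dominance, dominated by an undominated strategy `m`; and an undominated strategy survives
every round of the local elimination. So if `LS^k ⊆ GS^k`, any strategy that the global operator
removes from `GS^k` is already dominated on `LS^k` by a surviving strategy `m ∈ LS^k`, hence is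
removed by the local operator as well. When some opponent has no strategy left, every strategy
dominates every other one vacuously, in particular itself.
-/

section

variable {ι : Type*} [DecidableEq ι] {σ : ι → Type*} (p : ι → (∀ j, σ j) → ℝ)

theorem SDom.mono {G G' : ∀ i, Set (σ i)} (hG : G ≤ G') {i : ι} {s' s : σ i}
    (h : SDom p G' i s' s) : SDom p G i s' s :=
  fun t ht => h t fun j hj => hG j (ht j hj)

theorem SDom.trans {G : ∀ i, Set (σ i)} {i : ι} {a b c : σ i}
    (hab : SDom p G i a b) (hbc : SDom p G i b c) : SDom p G i a c :=
  fun t ht => (hbc t ht).trans (hab t ht)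

theorem SDom.irrefl {G : ∀ i, Set (σ i)} {i : ι} {t : ∀ j, σ j} (ht : OppIn G i t) (s : σ i) :
    ¬ SDom p G i s s :=
  fun h => lt_irrefl _ (h t ht)

theorem SDom.of_forall_not_oppIn {G : ∀ i, Set (σ i)} {i : ι} (h : ∀ t, ¬ OppIn G i t)
    (s' s : σ i) : SDom p G i s' s :=
  fun t ht => absurd ht (h t)

theorem SDom.exists_undominated [∀ i, Finite (σ i)] {G : ∀ i, Set (σ i)} {i : ι}
    {t : ∀ j, σ j} (ht : OppIn G i t) {s' s : σ i} (h : SDom p G i s' s) :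
    ∃ m, SDom p G i m s ∧ ∀ x, ¬ SDom p G i x m := by
  have : IsTrans (σ i) (SDom p G i) := ⟨fun _ _ _ => SDom.trans p⟩
  have : Std.Irrefl (SDom p G i) := ⟨SDom.irrefl p ht⟩
  obtain ⟨m, hms, hmin⟩ :=
    (Finite.wellFounded_of_trans_of_irrefl (SDom p G i)).has_min {x | SDom p G i x s} ⟨s', h⟩
  exact ⟨m, hms, fun x hxm => hmin x (SDom.trans p hxm hms) hxm⟩

theorem LS_le (G : ∀ i, Set (σ i)) : LS p G ≤ G :=
  fun _ _ hs => hs.1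

theorem mem_LS_iterate_of_forall_not_sdom {k : ℕ} {i : ι} {s : σ i}
    (h : ∀ x, ¬ SDom p ((LS p)^[k] ⊤) i x s) : s ∈ ((LS p)^[k] ⊤) i := by
  induction k with
  | zero => trivial
  | succ k ih =>
    rw [iterate_succ_apply'] at h ⊢
    have hle := LS_le p ((LS p)^[k] ⊤)
    exact ⟨ih fun x hx => h x (hx.mono p hle), fun ⟨x, _, hx⟩ => h x (hx.mono p hle)⟩

theorem LS_le_GS [∀ i, Finite (σ i)] {L G : ∀ i, Set (σ i)} (hLG : L ≤ G)
    (hL : ∀ i (s : σ i), (∀ x, ¬ SDom p L i x s) → s ∈ L i) : LS p L ≤ GS p G := by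
  rintro i s ⟨hsL, hs⟩
  refine ⟨hLG i hsL, fun ⟨s', hs'⟩ => ?_⟩
  have hdom : SDom p L i s' s := hs'.mono p hLG
  by_cases hopp : ∃ t, OppIn L i t
  · obtain ⟨t, ht⟩ := hopp
    obtain ⟨m, hms, hm⟩ := hdom.exists_undominated p ht
    exact hs ⟨m, hL i m hm, hms⟩
  · exact hs ⟨s, hsL, SDom.of_forall_not_oppIn p (not_exists.mp hopp) s s⟩

end

theorem LS_iter_subset_GS_iter_general {ι : Type*} [DecidableEq ι] {σ : ι → Type*}
    [∀ i, Fintype (σ i)] (p : ι → (∀ j, σ j) → ℝ)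
    (k : ℕ) :
    (LS p)^[k] ⊤ ≤ (GS p)^[k] ⊤ := by
  induction k with
  | zero => exact le_rfl
  | succ k ih =>
    rw [iterate_succ_apply', iterate_succ_apply']
    exact LS_le_GS p ih fun _ _ => mem_LS_iterate_of_forall_not_sdom p

/-- For every k, LS^k ⊆ GS^k (iterations starting at the full game). -/
theorem LS_iter_subset_GS_iter {ι : Type*} [DecidableEq ι] [Fintype ι] {σ : ι → Type*}
    [∀ i, Fintype (σ i)] [∀ i, Nonempty (σ i)]
    (hn : 1 < Fintype.card ι) (p : ι → (∀ j, σ j) → ℝ)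
    (k : ℕ) :
    (LS p)^[k] ⊤ ≤ (GS p)^[k] ⊤ :=
  LS_iter_subset_GS_iter_general p k
end

section
/- For every finite strategic game H, GS^ω = LS^ω: the outcome of iterating the global elimination of strategies strictly dominated by a pure strategy equals the outcome of iterating the local elimination of strategies strictly dominated by a pure strategy, both started from H. -/
open Function

section Aux

variable {ι : Type*} [DecidableEq ι] {σ : ι → Type*}

lemma sdom_anti (p : ι → (∀ j, σ j) → ℝ) {G G' : ∀ i, Set (σ i)} (h : G ≤ G')
    {i : ι} {s' s : σ i} (hd : SDom p G' i s' s) : SDom p G i s' s :=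
  fun t ht => hd t fun j hj => h j (ht j hj)

lemma ls_le (p : ι → (∀ j, σ j) → ℝ) (G : ∀ i, Set (σ i)) : LS p G ≤ G :=
  fun _ _ hs => hs.1

lemma gs_le_ls (p : ι → (∀ j, σ j) → ℝ) (G : ∀ i, Set (σ i)) : GS p G ≤ LS p G := by
  intro i s hs
  exact ⟨hs.1, fun ⟨s', _, hd⟩ => hs.2 ⟨s', hd⟩⟩

lemma gs_mono (p : ι → (∀ j, σ j) → ℝ) {G G' : ∀ i, Set (σ i)} (h : G ≤ G') :
    GS p G ≤ GS p G' := by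
  intro i s hs
  exact ⟨h i hs.1, fun ⟨s', hd⟩ => hs.2 ⟨s', sdom_anti p h hd⟩⟩

/-- The LS iteration stabilizes: its infimum is a fixpoint of LS. -/
lemma ls_fixed [Finite ι] [∀ i, Finite (σ i)] (p : ι → (∀ j, σ j) → ℝ) :
    LS p (⨅ k : ℕ, (LS p)^[k] ⊤) = ⨅ k : ℕ, (LS p)^[k] ⊤ := by
  set f : ℕ → ∀ i, Set (σ i) := fun k => (LS p)^[k] ⊤ with hf
  have hstep : ∀ k, f (k + 1) = LS p (f k) := fun k => by
    simp [hf, Function.iterate_succ_apply']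
  have hanti : Antitone f := antitone_nat_of_succ_le fun n => by
    rw [hstep]; exact ls_le p (f n)
  -- pigeonhole: two equal values
  obtain ⟨m, n, hmn, heq⟩ := Finite.exists_ne_map_eq_of_infinite f
  wlog hlt : m < n generalizing m n
  · exact this n m hmn.symm heq.symm (hmn.lt_or_gt.resolve_left hlt)
  have hsucc : f (m + 1) = f m := by
    refine le_antisymm (hanti (Nat.le_succ m)) ?_
    calc f m = f n := heq
    _ ≤ f (m + 1) := hanti hlt
  have hconst : ∀ k, f (m + k) = f m := by
    intro k; induction k with
    | zero => rfl
    | succ k ih =>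
      have : f (m + k + 1) = LS p (f (m + k)) := hstep _
      rw [show m + (k + 1) = m + k + 1 from rfl, this, ih, ← hstep, hsucc]
  have hinf : (⨅ k : ℕ, f k) = f m := by
    refine le_antisymm (iInf_le f m) (le_iInf fun k => ?_)
    rcases le_total k m with h | h
    · exact hanti h
    · obtain ⟨d, rfl⟩ := Nat.exists_eq_add_of_le h
      exact (hconst d).ge
  rw [hinf, ← hstep, hsucc]

/-- If some opponent's set is empty, every strategy dominates itself vacuously. -/
lemma sdom_self_of_empty (p : ι → (∀ j, σ j) → ℝ) {G : ∀ i, Set (σ i)} {i j : ι}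
    (hij : j ≠ i) (hj : G j = ∅) (s : σ i) : SDom p G i s s := by
  intro t ht
  exact absurd (ht j hij) (by rw [hj]; exact Set.notMem_empty _)

/-- Key lemma: the LS limit is contained in its image under GS. -/
lemma key [Fintype ι] [∀ i, Fintype (σ i)]
    (hn : 1 < Fintype.card ι) (p : ι → (∀ j, σ j) → ℝ) :
    (⨅ k : ℕ, (LS p)^[k] ⊤) ≤ GS p (⨅ k : ℕ, (LS p)^[k] ⊤) := by
  set f : ℕ → ∀ i, Set (σ i) := fun k => (LS p)^[k] ⊤ with hf
  set G : ∀ i, Set (σ i) := ⨅ k : ℕ, f k with hG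
  have hfix : LS p G = G := ls_fixed p
  have hGle : ∀ k, G ≤ f k := fun k => iInf_le f k
  have hmemG : ∀ i (s : σ i), s ∈ G i ↔ ∀ k, s ∈ f k i := by
    intro i s
    simp [hG, iInf_apply, Set.iInf_eq_iInter, Set.mem_iInter]
  by_cases hemp : ∃ j, G j = ∅
  · -- then G is empty everywhere
    obtain ⟨j, hj⟩ := hemp
    have h1 : ∀ i, i ≠ j → G i = ∅ := by
      intro i hij
      by_contra hne
      obtain ⟨s, hs⟩ := Set.nonempty_iff_ne_empty.2 hne
      have hs' : s ∈ LS p G i := by rw [hfix]; exact hs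
      exact hs'.2 ⟨s, hs, sdom_self_of_empty p (Ne.symm hij) hj s⟩
    have h2 : ∀ i, G i = ∅ := by
      intro i
      by_cases hij : i = j
      · subst hij
        obtain ⟨i', hi'⟩ := Fintype.exists_ne_of_one_lt_card hn i
        by_contra hne
        obtain ⟨s, hs⟩ := Set.nonempty_iff_ne_empty.2 hne
        have hs' : s ∈ LS p G i := by rw [hfix]; exact hs
        exact hs'.2 ⟨s, hs, sdom_self_of_empty p hi' (h1 i' hi') s⟩
      · exact h1 i hij
    intro i s hs
    exact absurd hs (by rw [h2 i]; exact Set.notMem_empty _)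
  · push_neg at hemp
    have hne : ∀ j, (G j).Nonempty := hemp
    intro i s hs
    refine ⟨hs, ?_⟩
    rintro ⟨s', hd⟩
    -- the strict domination relation on σ i
    set r : σ i → σ i → Prop := SDom p G i with hr
    have htrans : Transitive r := by
      intro a b c hab hbc t ht
      exact (hbc t ht).trans (hab t ht)
    have hirr : ∀ a, ¬ r a a := by
      intro a ha
      exact lt_irrefl _ (ha (fun j => (hne j).some) fun j _ => (hne j).some_mem)
    have hwf : WellFounded r := by
      have : IsTrans (σ i) r := ⟨htrans⟩
      have : IsIrrefl (σ i) r := ⟨hirr⟩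
      exact Finite.wellFounded_of_trans_of_irrefl r
    obtain ⟨s₀, hs₀S, hs₀min⟩ := hwf.has_min {c | r c s} ⟨s', hd⟩
    have hmax : ∀ d, ¬ r d s₀ := by
      intro d hd'
      exact hs₀min d (htrans hd' hs₀S) hd'
    -- the maximal dominator s₀ belongs to G i
    have hs₀G : s₀ ∈ G i := by
      classical
      by_contra hnot
      rw [hmemG] at hnot
      push_neg at hnot
      have hex : ∃ k, s₀ ∉ f k i := hnot
      have hk₀spec : s₀ ∉ f (Nat.find hex) i := Nat.find_spec hex
      have hk₀pos : Nat.find hex ≠ 0 := by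
        intro h
        rw [h] at hk₀spec
        exact hk₀spec (by simp [hf])
      obtain ⟨k', hk'⟩ := Nat.exists_eq_succ_of_ne_zero hk₀pos
      rw [hk'] at hk₀spec
      have hmemk' : s₀ ∈ f k' i := by
        by_contra h
        have := Nat.find_min' hex h
        rw [hk'] at this
        omega
      have hLSk : f (k' + 1) = LS p (f k') := by
        simp [hf, Function.iterate_succ_apply']
      rw [hLSk] at hk₀spec
      have : ∃ s'' ∈ f k' i, SDom p (f k') i s'' s₀ := by
        by_contra h
        exact hk₀spec ⟨hmemk', h⟩
      obtain ⟨s'', _, hd''⟩ := this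
      exact hmax s'' (sdom_anti p (hGle k') hd'')
    have hs' : s ∈ LS p G i := by rw [hfix]; exact hs
    exact hs'.2 ⟨s₀, hs₀G, hs₀S⟩

end Aux

/-- GS^ω = LS^ω. -/
theorem GS_omega_eq_LS_omega {ι : Type*} [DecidableEq ι] [Fintype ι] {σ : ι → Type*}
    [∀ i, Fintype (σ i)] [∀ i, Nonempty (σ i)]
    (hn : 1 < Fintype.card ι) (p : ι → (∀ j, σ j) → ℝ) :
    (⨅ k : ℕ, (GS p)^[k] ⊤) = ⨅ k : ℕ, (LS p)^[k] ⊤ := by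
  refine le_antisymm ?_ ?_
  · -- GS^k ≤ LS^k for every k
    have h : ∀ k : ℕ, (GS p)^[k] ⊤ ≤ (LS p)^[k] ⊤ := by
      intro k
      induction k with
      | zero => exact le_rfl
      | succ k ih =>
        rw [Function.iterate_succ_apply', Function.iterate_succ_apply']
        exact le_trans (gs_mono p ih) (gs_le_ls p _)
    exact le_iInf fun k => le_trans (iInf_le _ k) (h k)
  · -- LS^ω ≤ GS^k for every k
    have h : ∀ k : ℕ, (⨅ k : ℕ, (LS p)^[k] ⊤) ≤ (GS p)^[k] ⊤ := by
      intro k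
      induction k with
      | zero => exact le_top
      | succ k ih =>
        rw [Function.iterate_succ_apply']
        exact le_trans (key hn p) (gs_mono p ih)
    exact le_iInf h
end

section
/- For every finite strategic game H, MGS^ω = MLS^ω: the outcome of iterating the global elimination of strategies strictly dominated by a mixed strategy equals the outcome of iterating the local elimination of strategies strictly dominated by a mixed strategy, both started from H. -/
open Function

/-!
Every MGS step removes at least what the MLS step removes, so `MGS^ω ≤ MLS^ω`. Conversely the
MLS iteration stabilises at a fixpoint `L`, and every strategy `a ∉ L` is dominated on `L` by a
mixed strategy. If a mixed strategy `m₀` dominates `s ∈ L` on `L`, pick, among the mixed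
strategies doing at least as well as `m₀` against every profile in `L`, one maximising (by
compactness) the payoff against a fixed profile `t₀` in `L`. Its support lies in `L`: weight on
some `a ∉ L` could be shifted to a dominator of `a`, which raises the payoff against `t₀`. So `s`
would be dominated within `L`, contradicting `MLS L = L`; hence `MGS L = L` and `L ≤ MGS^ω`.
-/

theorem exists_iterate_fixed_eq_iInf {α : Type*} [CompleteLattice α] [WellFoundedLT α]
    {f : α → α} (hf : ∀ x, f x ≤ x) (x : α) :
    ∃ K, f (f^[K] x) = f^[K] x ∧ ⨅ k, f^[k] x = f^[K] x := by
  have hanti : Antitone fun k => f^[k] x :=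
    antitone_nat_of_succ_le fun k => by rw [iterate_succ_apply']; exact hf _
  obtain ⟨K, hK⟩ := WellFoundedLT.antitone_chain_condition hanti
  refine ⟨K, ?_, le_antisymm (iInf_le _ K) (le_iInf fun k => ?_)⟩
  · rw [← iterate_succ_apply' f K, ← hK (K + 1) K.le_succ]
  · rcases le_total K k with h | h
    · exact (hK k h).le
    · exact hanti h

theorem mixed_mono {α : Type*} [Fintype α] {A B : Set α} (h : A ⊆ B) {m : α → ℝ}
    (hm : m ∈ Mixed A) : m ∈ Mixed B :=
  ⟨hm.1, hm.2.1, fun a ha => h (hm.2.2 a ha)⟩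

theorem mixed_univ (α : Type*) [Fintype α] : Mixed (Set.univ : Set α) = stdSimplex ℝ α := by
  ext m
  simp [Mixed, stdSimplex]

theorem add_smul_sub_single_mem_stdSimplex {α : Type*} [Fintype α] [DecidableEq α]
    {m m' : α → ℝ} (hm : m ∈ stdSimplex ℝ α) (hm' : m' ∈ stdSimplex ℝ α) (a : α) :
    m + m a • (m' - Pi.single a 1) ∈ stdSimplex ℝ α := by
  refine ⟨fun b => ?_, ?_⟩
  · rcases eq_or_ne b a with rfl | hb
    · have : m b + m b * (m' b - 1) = m b * m' b := by ring
      simpa [this] using mul_nonneg (hm.1 b) (hm'.1 b)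
    · simpa [hb] using add_nonneg (hm.1 b) (mul_nonneg (hm.1 a) (hm'.1 b))
  · simp [Finset.sum_add_distrib, ← Finset.mul_sum, Finset.sum_sub_distrib, hm.2, hm'.2]

section Domination

variable {ι : Type*} [DecidableEq ι] {σ : ι → Type*}

theorem OppIn.mono {G G' : ∀ i, Set (σ i)} (h : G ≤ G') {i : ι} {t : ∀ j, σ j}
    (ht : OppIn G i t) : OppIn G' i t :=
  fun j hj => h j (ht j hj)

variable [∀ i, Fintype (σ i)] (p : ι → (∀ j, σ j) → ℝ)

theorem epay_eq_dotProduct (i : ι) (m : σ i → ℝ) (t : ∀ j, σ j) :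
    epay p i m t = m ⬝ᵥ fun a => p i (update t i a) :=
  rfl

theorem continuous_epay (i : ι) (t : ∀ j, σ j) : Continuous fun m : σ i → ℝ => epay p i m t :=
  continuous_finsetSum _ fun a _ => (continuous_apply a).mul continuous_const

theorem epay_add_smul_sub_single (i : ι) [DecidableEq (σ i)] (m m' : σ i → ℝ) (c : ℝ) (a : σ i)
    (t : ∀ j, σ j) :
    epay p i (m + c • (m' - Pi.single a 1)) t =
      epay p i m t + c * (epay p i m' t - p i (update t i a)) := by
  simp [epay_eq_dotProduct, add_dotProduct, sub_dotProduct, single_dotProduct]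

theorem MSDom.anti {G G' : ∀ i, Set (σ i)} (h : G ≤ G') {i : ι} {m : σ i → ℝ} {s : σ i}
    (hd : MSDom p G' i m s) : MSDom p G i m s :=
  fun t ht => hd t (ht.mono h)

theorem MLS_le (G : ∀ i, Set (σ i)) : MLS p G ≤ G :=
  fun _ _ hs => hs.1

theorem MGS_le_MLS (G : ∀ i, Set (σ i)) : MGS p G ≤ MLS p G :=
  fun _ _ hs => ⟨hs.1, fun ⟨m, hm, hd⟩ => hs.2 ⟨m, mixed_mono (Set.subset_univ _) hm, hd⟩⟩

theorem MGS_mono : Monotone (MGS p) :=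
  fun _ _ h i _ hs => ⟨h i hs.1, fun ⟨m, hm, hd⟩ => hs.2 ⟨m, hm, hd.anti p h⟩⟩

theorem exists_msdom_of_notMem_iterate_MLS {k : ℕ} {i : ι} {a : σ i}
    (ha : a ∉ (MLS p)^[k] ⊤ i) :
    ∃ j, ∃ m ∈ Mixed (Set.univ : Set (σ i)), MSDom p ((MLS p)^[j] ⊤) i m a := by
  induction k with
  | zero => exact absurd trivial ha
  | succ k ih =>
    rw [iterate_succ_apply'] at ha
    by_cases hmem : a ∈ (MLS p)^[k] ⊤ i
    · obtain ⟨m, hm, hd⟩ : ∃ m ∈ Mixed ((MLS p)^[k] ⊤ i), MSDom p ((MLS p)^[k] ⊤) i m a := by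
        by_contra h
        exact ha ⟨hmem, h⟩
      exact ⟨k, m, mixed_mono (Set.subset_univ _) hm, hd⟩
    · exact ih hmem

theorem exists_msdom_mixed_of_msdom {L : ∀ i, Set (σ i)} {i : ι}
    (hL : ∀ a ∉ L i, ∃ m ∈ Mixed (Set.univ : Set (σ i)), MSDom p L i m a)
    {t₀ : ∀ j, σ j} (ht₀ : OppIn L i t₀) {s : σ i} {m₀ : σ i → ℝ}
    (hm₀ : m₀ ∈ Mixed (Set.univ : Set (σ i))) (hd : MSDom p L i m₀ s) :
    ∃ m ∈ Mixed (L i), MSDom p L i m s := by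
  classical
  rw [mixed_univ (σ i)] at hm₀ hL
  let D : Set (σ i → ℝ) :=
    stdSimplex ℝ (σ i) ∩ ⋂ t, ⋂ (_ : OppIn L i t), {m | epay p i m₀ t ≤ epay p i m t}
  have hD : IsCompact D := (isCompact_stdSimplex ℝ (σ i)).inter_right <|
    isClosed_iInter fun t => isClosed_iInter fun _ =>
      isClosed_le continuous_const (continuous_epay p i t)
  obtain ⟨m, ⟨hm, hmD⟩, hmax⟩ :=
    hD.exists_isMaxOn ⟨m₀, hm₀, by simp⟩ (continuous_epay p i t₀).continuousOn
  simp only [Set.mem_iInter, Set.mem_ofPred_eq] at hmD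
  refine ⟨m, ⟨hm.1, hm.2, fun a ha => ?_⟩, fun t ht => (hd t ht).trans_le (hmD t ht)⟩
  by_contra haL
  obtain ⟨ma, hma, hda⟩ := hL a haL
  have hpos : 0 < m a := (hm.1 a).lt_of_ne' ha
  have hshift (t : ∀ j, σ j) (ht : OppIn L i t) :
      epay p i m t < epay p i (m + m a • (ma - Pi.single a 1)) t := by
    rw [epay_add_smul_sub_single]
    exact lt_add_of_pos_right _ (mul_pos hpos (sub_pos.2 (hda t ht)))
  have hmem : m + m a • (ma - Pi.single a 1) ∈ D := by
    refine ⟨add_smul_sub_single_mem_stdSimplex hm hma a, ?_⟩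
    simp only [Set.mem_iInter, Set.mem_ofPred_eq]
    exact fun t ht => (hmD t ht).trans (hshift t ht).le
  exact (hshift t₀ ht₀).not_ge (hmax hmem)

theorem MGS_eq_MLS_of_forall_msdom {L : ∀ i, Set (σ i)}
    (hL : ∀ i, ∀ a ∉ L i, ∃ m ∈ Mixed (Set.univ : Set (σ i)), MSDom p L i m a) :
    MGS p L = MLS p L := by
  classical
  refine le_antisymm (MGS_le_MLS p L) fun i s hs => ⟨hs.1, ?_⟩
  rintro ⟨m₀, hm₀, hd⟩
  by_cases hopp : ∃ t₀, OppIn L i t₀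
  · obtain ⟨t₀, ht₀⟩ := hopp
    exact hs.2 (exists_msdom_mixed_of_msdom p (hL i) ht₀ hm₀ hd)
  · -- with no opponent profile in `L`, domination is vacuous, even by the pure strategy `s`
    refine hs.2 ⟨Pi.single s 1, ⟨fun b => ?_, by simp, fun b hb => ?_⟩,
      fun t ht => (hopp ⟨t, ht⟩).elim⟩
    · by_cases hb : b = s <;> simp [hb]
    · by_cases hbs : b = s
      · exact hbs ▸ hs.1
      · simp [hbs] at hb

end Domination

theorem MGS_omega_eq_MLS_omega_general {ι : Type*} [DecidableEq ι] [Fintype ι] {σ : ι → Type*}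
    [∀ i, Fintype (σ i)] (p : ι → (∀ j, σ j) → ℝ) :
    (⨅ k : ℕ, (MGS p)^[k] ⊤) = ⨅ k : ℕ, (MLS p)^[k] ⊤ := by
  obtain ⟨K, hfix, hinf⟩ := exists_iterate_fixed_eq_iInf (MLS_le p) ⊤
  set L := (MLS p)^[K] ⊤
  have hL_le (j : ℕ) : L ≤ (MLS p)^[j] ⊤ := hinf ▸ iInf_le _ j
  have hMGS : MGS p L = L := by
    refine (MGS_eq_MLS_of_forall_msdom p fun i a ha => ?_).trans hfix
    obtain ⟨j, m, hm, hd⟩ := exists_msdom_of_notMem_iterate_MLS p ha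
    exact ⟨m, hm, hd.anti p (hL_le j)⟩
  rw [hinf]
  refine le_antisymm ((iInf_le _ K).trans ((MGS_mono p).iterate_le_of_le (MGS_le_MLS p) K ⊤))
    (le_iInf fun k => ?_)
  calc L = (MGS p)^[k] L := (iterate_fixed hMGS k).symm
    _ ≤ (MGS p)^[k] ⊤ := (MGS_mono p).iterate k le_top

/-- MGS^ω = MLS^ω. -/
theorem MGS_omega_eq_MLS_omega {ι : Type*} [DecidableEq ι] [Fintype ι] {σ : ι → Type*}
    [∀ i, Fintype (σ i)] [∀ i, Nonempty (σ i)]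
    (hn : 1 < Fintype.card ι) (p : ι → (∀ j, σ j) → ℝ) :
    (⨅ k : ℕ, (MGS p)^[k] ⊤) = ⨅ k : ℕ, (MLS p)^[k] ⊤ :=
  MGS_omega_eq_MLS_omega_general p
end

section
/- There exists a finite strategic game H for which the inclusion MLW^ω ⊆ LW^ω fails. Concretely, let H be the two-player game with row player strategies {A, B, C, D}, column player strategies {X, Y, Z}, and payoffs (row, column): (A,X) = (2,1), (A,Y) = (0,1), (A,Z) = (1,0), (B,X) = (0,1), (B,Y) = (2,1), (B,Z) = (1,0), (C,X) = (1,1), (C,Y) = (1,0), (C,Z) = (0,0), (D,X) = (1,0), (D,Y) = (0,1), (D,Z) = (0,0). Then MLW^ω(H) = ({A, B}, {X, Y}) while LW^ω(H) = ({A}, {X}), so MLW^ω ⊄ LW^ω. -/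
open Function

/-! The concrete game from Example 1: players are `Bool` (`true` = row player,
`false` = column player), row strategies `Fin 4` (`0 = A, 1 = B, 2 = C, 3 = D`),
column strategies `Fin 3` (`0 = X, 1 = Y, 2 = Z`). -/

/-- Strategy sets of the two players. -/
def Str16 : Bool → Type := fun b => cond b (Fin 4) (Fin 3)

instance (b : Bool) : Fintype (Str16 b) := by
  cases b
  · exact inferInstanceAs (Fintype (Fin 3))
  · exact inferInstanceAs (Fintype (Fin 4))

instance (b : Bool) : Nonempty (Str16 b) := by
  cases b
  · exact inferInstanceAs (Nonempty (Fin 3))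
  · exact inferInstanceAs (Nonempty (Fin 4))

/-- Row player's payoff matrix. -/
def rowPay16 : Fin 4 → Fin 3 → ℝ :=
  ![![2, 0, 1], ![0, 2, 1], ![1, 1, 0], ![1, 0, 0]]

/-- Column player's payoff matrix. -/
def colPay16 : Fin 4 → Fin 3 → ℝ :=
  ![![1, 1, 0], ![1, 1, 0], ![1, 0, 0], ![0, 1, 0]]

/-- The payoff functions of the game. -/
def pay16 : Bool → (∀ j, Str16 j) → ℝ
  | true => fun t => rowPay16 (t true) (t false)
  | false => fun t => colPay16 (t true) (t false)

/-- The restriction ({A,B}, {X,Y}). -/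
def GM16 : ∀ b, Set (Str16 b)
  | true => ({0, 1} : Set (Fin 4))
  | false => ({0, 1} : Set (Fin 3))

/-- The restriction ({A}, {X}). -/
def GL16 : ∀ b, Set (Str16 b)
  | true => ({0} : Set (Fin 4))
  | false => ({0} : Set (Fin 3))

/-! In the first round, mixed elimination removes C as well as D and Z: the even mix of A
and B matches C against X and Y and beats it against Z. Then ({A, B}, {X, Y}) is stable,
since A and B are the unique best replies to X and Y, and against A and B the column player
is indifferent between X and Y.

Pure elimination cannot remove C in that round, because A is worse than C against Y and B
is worse against X. But C keeps the column player's X ahead of Y, and once D is gone nothing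
favours Y, so Y goes in the second round. Against X alone, A then dominates B and C. -/

theorem iInf_iterate_top_eq_of_isFixedPt {α : Type*} [CompleteLattice α] {f : α → α}
    (hf : f ≤ id) {n : ℕ} {a : α} (hn : f^[n] ⊤ = a) (ha : IsFixedPt f a) :
    ⨅ k, f^[k] ⊤ = a := by
  refine le_antisymm (hn ▸ iInf_le _ n) (le_iInf fun k => ?_)
  calc a = f^[k] (f^[n] ⊤) := by rw [hn, ha.iterate k]
    _ = f^[n] (f^[k] ⊤) := by rw [← iterate_add_apply, add_comm, iterate_add_apply]
    _ ≤ f^[k] ⊤ := iterate_le_id_of_le_id hf n _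

section Dominance

variable {ι : Type*} [DecidableEq ι] {σ : ι → Type*}
  {p : ι → (∀ j, σ j) → ℝ} {G : ∀ i, Set (σ i)} {i : ι}

theorem LW_le_id : LW p ≤ id := fun _ _ _ h => h.1

theorem MLW_le_id [∀ i, Fintype (σ i)] : MLW p ≤ id := fun _ _ _ h => h.1

theorem epay_single [∀ i, Fintype (σ i)] [DecidableEq (σ i)] (s : σ i) (t : ∀ j, σ j) :
    epay p i (Pi.single s 1) t = p i (update t i s) := by
  simp [epay, Pi.single_apply]

theorem single_mem_mixed {α : Type*} [Fintype α] [DecidableEq α] {A : Set α} {a : α}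
    (ha : a ∈ A) : Pi.single a (1 : ℝ) ∈ Mixed A := by
  refine ⟨fun b => ?_, by simp, fun b hb => ?_⟩
  · by_cases h : b = a <;> simp [h]
  · by_cases h : b = a
    · exact h ▸ ha
    · simp [h] at hb

theorem wDom_iff_mWDom_single [∀ i, Fintype (σ i)] [DecidableEq (σ i)] {s' s : σ i} :
    WDom p G i s' s ↔ MWDom p G i (Pi.single s' 1) s := by
  simp only [WDom, MWDom, epay_single]

theorem MLW_le_LW [∀ i, Fintype (σ i)] : MLW p G ≤ LW p G := by
  classical
  rintro i s ⟨hs, hnd⟩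
  exact ⟨hs, fun ⟨s', hs', hd⟩ =>
    hnd ⟨Pi.single s' 1, single_mem_mixed hs', wDom_iff_mWDom_single.1 hd⟩⟩

theorem mem_LW_of_forall_exists_lt {s : σ i} (hs : s ∈ G i)
    (h : ∀ s' ∈ G i, s' ≠ s →
      ∃ t, OppIn G i t ∧ p i (update t i s') < p i (update t i s)) :
    s ∈ LW p G i := by
  refine ⟨hs, fun ⟨s', hs', hle, _, _, hlt₀⟩ => ?_⟩
  rcases eq_or_ne s' s with rfl | hne
  · exact lt_irrefl _ hlt₀
  · obtain ⟨t, ht, hlt⟩ := h s' hs' hne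
    exact (hle t ht).not_gt hlt

theorem mem_LW_of_subsingleton {s : σ i} (hs : s ∈ G i) (h : (G i).Subsingleton) :
    s ∈ LW p G i :=
  mem_LW_of_forall_exists_lt hs fun _ hs' hne => absurd (h hs' hs) hne

theorem LW_eq_self_of_subsingleton (h : ∀ i, (G i).Subsingleton) : LW p G = G :=
  le_antisymm (LW_le_id G) fun i _ hs => mem_LW_of_subsingleton hs (h i)

theorem mem_MLW_of_unique_best_reply [∀ i, Fintype (σ i)] {s : σ i} (hs : s ∈ G i)
    {t : ∀ j, σ j} (ht : OppIn G i t)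
    (hbest : ∀ a, a ≠ s → p i (update t i a) < p i (update t i s)) :
    s ∈ MLW p G i := by
  refine ⟨hs, fun ⟨m, ⟨hm0, hm1, _⟩, hle, t', _, hlt⟩ => ?_⟩
  have hgap : ∀ a, 0 ≤ m a * (p i (update t i s) - p i (update t i a)) := fun a => by
    refine mul_nonneg (hm0 a) ?_
    rcases eq_or_ne a s with rfl | ha
    · simp
    · linarith [hbest a ha]
  -- against `t`, any weight that `m` puts off `s` is paid for strictly
  have hloss : ∑ a, m a * (p i (update t i s) - p i (update t i a)) = 0 := by
    refine le_antisymm ?_ (Finset.sum_nonneg fun a _ => hgap a)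
    have := hle t ht
    simp only [mul_sub, Finset.sum_sub_distrib, ← Finset.sum_mul, hm1, one_mul]
    unfold epay at this
    linarith
  have hsupp : ∀ a, a ≠ s → m a = 0 := fun a ha => by
    have := (Finset.sum_eq_zero_iff_of_nonneg fun a _ => hgap a).1 hloss a (Finset.mem_univ a)
    exact (mul_eq_zero.1 this).resolve_right (by linarith [hbest a ha])
  have hpure : ∀ t, epay p i m t = m s * p i (update t i s) := fun t =>
    Finset.sum_eq_single s (fun a _ ha => by rw [hsupp a ha, zero_mul]) (by simp)
  have hms : m s = 1 := by
    rwa [Finset.sum_eq_single s (fun a _ ha => hsupp a ha) (by simp)] at hm1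
  rw [hpure, hms, one_mul] at hlt
  exact lt_irrefl _ hlt

theorem mem_MLW_of_forall_payoff_eq [∀ i, Fintype (σ i)] {s : σ i} (hs : s ∈ G i)
    (heq : ∀ t, OppIn G i t → ∀ a ∈ G i, p i (update t i a) = p i (update t i s)) :
    s ∈ MLW p G i := by
  refine ⟨hs, fun ⟨m, ⟨_, hm1, hmA⟩, _, t, ht, hlt⟩ => ?_⟩
  have hpay : epay p i m t = p i (update t i s) :=
    calc epay p i m t = ∑ a, m a * p i (update t i s) := Finset.sum_congr rfl fun a _ => by
          by_cases h : m a = 0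
          · simp [h]
          · rw [heq t ht a (hmA a h)]
      _ = p i (update t i s) := by rw [← Finset.sum_mul, hm1, one_mul]
  exact lt_irrefl _ (hpay ▸ hlt)

theorem not_mem_LW_of_wDom {s' s : σ i} (h : WDom p G i s' s) (hs' : s' ∈ G i) :
    s ∉ LW p G i :=
  fun hs => hs.2 ⟨s', hs', h⟩

theorem not_mem_MLW_of_mWDom [∀ i, Fintype (σ i)] {m : σ i → ℝ} {s : σ i}
    (h : MWDom p G i m s) (hm : m ∈ Mixed (G i)) : s ∉ MLW p G i :=
  fun hs => hs.2 ⟨m, hm, h⟩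

end Dominance

section Example

theorem oppIn_true_iff {σ : Bool → Type*} {G : ∀ b, Set (σ b)} {t : ∀ b, σ b} :
    OppIn G true t ↔ t false ∈ G false :=
  ⟨fun h => h false (by decide), fun h b hb => by cases b <;> trivial⟩

theorem oppIn_false_iff {σ : Bool → Type*} {G : ∀ b, Set (σ b)} {t : ∀ b, σ b} :
    OppIn G false t ↔ t true ∈ G true :=
  ⟨fun h => h true (by decide), fun h b hb => by cases b <;> trivial⟩

def profile16 (a : Fin 4) (x : Fin 3) : ∀ b, Str16 b
  | true => a
  | false => x

theorem pay16_update_true (t : ∀ b, Str16 b) (a : Fin 4) :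
    pay16 true (update t true a) = rowPay16 a (t false) := rfl

theorem pay16_update_false (t : ∀ b, Str16 b) (x : Fin 3) :
    pay16 false (update t false x) = colPay16 (t true) x := rfl

theorem wDom_true_iff {G : ∀ b, Set (Str16 b)} {s' s : Fin 4} :
    WDom pay16 G true s' s ↔
      (∀ x : Fin 3, x ∈ G false → rowPay16 s x ≤ rowPay16 s' x) ∧
      ∃ x : Fin 3, x ∈ G false ∧ rowPay16 s x < rowPay16 s' x := by
  simp only [WDom, pay16_update_true, oppIn_true_iff]
  exact ⟨fun ⟨hle, t, ht, hlt⟩ => ⟨fun x hx => hle (profile16 s x) hx, t false, ht, hlt⟩,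
    fun ⟨hle, x, hx, hlt⟩ => ⟨fun t ht => hle _ ht, profile16 s x, hx, hlt⟩⟩

theorem wDom_false_iff {G : ∀ b, Set (Str16 b)} {s' s : Fin 3} :
    WDom pay16 G false s' s ↔
      (∀ a : Fin 4, a ∈ G true → colPay16 a s ≤ colPay16 a s') ∧
      ∃ a : Fin 4, a ∈ G true ∧ colPay16 a s < colPay16 a s' := by
  simp only [WDom, pay16_update_false, oppIn_false_iff]
  exact ⟨fun ⟨hle, t, ht, hlt⟩ => ⟨fun a ha => hle (profile16 a s) ha, t true, ht, hlt⟩,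
    fun ⟨hle, a, ha, hlt⟩ => ⟨fun t ht => hle _ ht, profile16 a s, ha, hlt⟩⟩

theorem mWDom_true_iff {G : ∀ b, Set (Str16 b)} {m : Fin 4 → ℝ} {s : Fin 4} :
    MWDom pay16 G true m s ↔
      (∀ x : Fin 3, x ∈ G false → rowPay16 s x ≤ ∑ a : Fin 4, m a * rowPay16 a x) ∧
      ∃ x : Fin 3, x ∈ G false ∧ rowPay16 s x < ∑ a : Fin 4, m a * rowPay16 a x := by
  simp only [MWDom, epay, pay16_update_true, oppIn_true_iff]
  exact ⟨fun ⟨hle, t, ht, hlt⟩ => ⟨fun x hx => hle (profile16 s x) hx, t false, ht, hlt⟩,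
    fun ⟨hle, x, hx, hlt⟩ => ⟨fun t ht => hle _ ht, profile16 s x, hx, hlt⟩⟩

attribute [local simp] rowPay16 colPay16 Matrix.cons_val_two Matrix.cons_val_three

def GLW1 : ∀ b, Set (Str16 b)
  | true => ({0, 1, 2} : Set (Fin 4))
  | false => ({0, 1} : Set (Fin 3))

def GLW2 : ∀ b, Set (Str16 b)
  | true => ({0, 1, 2} : Set (Fin 4))
  | false => ({0} : Set (Fin 3))

section Survivors

variable {G : ∀ b, Set (Str16 b)}

theorem A_mem_MLW (hA : (0 : Fin 4) ∈ G true) (hX : (0 : Fin 3) ∈ G false) :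
    (0 : Fin 4) ∈ MLW pay16 G true :=
  mem_MLW_of_unique_best_reply hA (t := profile16 0 0) (oppIn_true_iff.2 hX) fun a ha => by
    fin_cases a <;> first | exact absurd rfl ha | norm_num [pay16_update_true, profile16]

theorem B_mem_MLW (hB : (1 : Fin 4) ∈ G true) (hY : (1 : Fin 3) ∈ G false) :
    (1 : Fin 4) ∈ MLW pay16 G true :=
  mem_MLW_of_unique_best_reply hB (t := profile16 0 1) (oppIn_true_iff.2 hY) fun a ha => by
    fin_cases a <;> first | exact absurd rfl ha | norm_num [pay16_update_true, profile16]

theorem X_mem_MLW (hX : (0 : Fin 3) ∈ G false) (hC : (2 : Fin 4) ∈ G true) :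
    (0 : Fin 3) ∈ MLW pay16 G false :=
  mem_MLW_of_unique_best_reply hX (t := profile16 2 0) (oppIn_false_iff.2 hC) fun x hx => by
    fin_cases x <;> first | exact absurd rfl hx | norm_num [pay16_update_false, profile16]

theorem Y_mem_MLW (hY : (1 : Fin 3) ∈ G false) (hD : (3 : Fin 4) ∈ G true) :
    (1 : Fin 3) ∈ MLW pay16 G false :=
  mem_MLW_of_unique_best_reply hY (t := profile16 3 0) (oppIn_false_iff.2 hD) fun x hx => by
    fin_cases x <;> first | exact absurd rfl hx | norm_num [pay16_update_false, profile16]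

theorem C_mem_LW (hC : (2 : Fin 4) ∈ G true) (hX : (0 : Fin 3) ∈ G false)
    (hY : (1 : Fin 3) ∈ G false) : (2 : Fin 4) ∈ LW pay16 G true := by
  refine mem_LW_of_forall_exists_lt hC fun (a : Fin 4) _ ha => ?_
  fin_cases a
  · exact ⟨profile16 0 1, oppIn_true_iff.2 hY, by norm_num [pay16_update_true, profile16]⟩
  · exact ⟨profile16 0 0, oppIn_true_iff.2 hX, by norm_num [pay16_update_true, profile16]⟩
  · exact absurd rfl ha
  · exact ⟨profile16 0 1, oppIn_true_iff.2 hY, by norm_num [pay16_update_true, profile16]⟩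

end Survivors

theorem wDom_A_D : WDom pay16 ⊤ true (0 : Fin 4) (3 : Fin 4) :=
  wDom_true_iff.2 ⟨fun x _ => by fin_cases x <;> norm_num, 0, trivial, by norm_num⟩

theorem wDom_X_Z : WDom pay16 ⊤ false (0 : Fin 3) (2 : Fin 3) :=
  wDom_false_iff.2 ⟨fun a _ => by fin_cases a <;> norm_num, 0, trivial, by norm_num⟩

theorem mWDom_AB_C : MWDom pay16 ⊤ true ![1/2, 1/2, 0, 0] (2 : Fin 4) :=
  mWDom_true_iff.2 ⟨fun x _ => by fin_cases x <;> norm_num [Fin.sum_univ_four],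
    2, trivial, by norm_num [Fin.sum_univ_four]⟩

theorem wDom_X_Y : WDom pay16 GLW1 false (0 : Fin 3) (1 : Fin 3) :=
  wDom_false_iff.2 ⟨fun a ha => by rcases ha with rfl | rfl | rfl <;> norm_num,
    2, Or.inr (Or.inr rfl), by norm_num⟩

theorem wDom_A_B : WDom pay16 GLW2 true (0 : Fin 4) (1 : Fin 4) :=
  wDom_true_iff.2 ⟨fun x hx => by rw [show x = 0 from hx]; norm_num, 0, rfl, by norm_num⟩

theorem wDom_A_C : WDom pay16 GLW2 true (0 : Fin 4) (2 : Fin 4) :=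
  wDom_true_iff.2 ⟨fun x hx => by rw [show x = 0 from hx]; norm_num, 0, rfl, by norm_num⟩

theorem MLW_top : MLW pay16 ⊤ = GM16 := by
  funext b
  -- the cases come in the order X, Y, Z, A, B, C, D
  cases b <;> ext s <;> fin_cases s
  · exact iff_of_true (X_mem_MLW trivial trivial) (Or.inl rfl)
  · exact iff_of_true (Y_mem_MLW trivial trivial) (Or.inr rfl)
  · exact iff_of_false (fun h => not_mem_LW_of_wDom wDom_X_Z trivial (MLW_le_LW _ h))
      (by rintro (h | h) <;> cases h)
  · exact iff_of_true (A_mem_MLW trivial trivial) (Or.inl rfl)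
  · exact iff_of_true (B_mem_MLW trivial trivial) (Or.inr rfl)
  · exact iff_of_false (not_mem_MLW_of_mWDom mWDom_AB_C
      ⟨fun a => by fin_cases a <;> norm_num, (Fin.sum_univ_four _).trans (by norm_num),
        fun _ _ => trivial⟩) (by rintro (h | h) <;> cases h)
  · exact iff_of_false (fun h => not_mem_LW_of_wDom wDom_A_D trivial (MLW_le_LW _ h))
      (by rintro (h | h) <;> cases h)

theorem MLW_GM16 : MLW pay16 GM16 = GM16 := by
  refine le_antisymm (MLW_le_id _) fun b => ?_
  cases b
  · refine fun x hx => mem_MLW_of_forall_payoff_eq hx fun t ht y hy => ?_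
    have ha : t true = (0 : Fin 4) ∨ t true = (1 : Fin 4) := oppIn_false_iff.1 ht
    rcases ha with ha | ha <;> rcases hx with rfl | rfl <;>
      rcases hy with rfl | rfl <;> simp [pay16_update_false, ha]
  · rintro a (rfl | rfl)
    · exact A_mem_MLW (Or.inl rfl) (Or.inl rfl)
    · exact B_mem_MLW (Or.inr rfl) (Or.inr rfl)

theorem LW_top : LW pay16 ⊤ = GLW1 := by
  funext b
  cases b <;> ext s <;> fin_cases s
  · exact iff_of_true (MLW_le_LW _ (X_mem_MLW trivial trivial)) (Or.inl rfl)
  · exact iff_of_true (MLW_le_LW _ (Y_mem_MLW trivial trivial)) (Or.inr rfl)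
  · exact iff_of_false (not_mem_LW_of_wDom wDom_X_Z trivial) (by rintro (h | h) <;> cases h)
  · exact iff_of_true (MLW_le_LW _ (A_mem_MLW trivial trivial)) (Or.inl rfl)
  · exact iff_of_true (MLW_le_LW _ (B_mem_MLW trivial trivial)) (Or.inr (Or.inl rfl))
  · exact iff_of_true (C_mem_LW trivial trivial trivial) (Or.inr (Or.inr rfl))
  · exact iff_of_false (not_mem_LW_of_wDom wDom_A_D trivial)
      (by rintro (h | h | h) <;> cases h)

theorem LW_GLW1 : LW pay16 GLW1 = GLW2 := by
  funext b
  cases b <;> ext s <;> fin_cases s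
  · exact iff_of_true (MLW_le_LW _ (X_mem_MLW (Or.inl rfl) (Or.inr (Or.inr rfl)))) rfl
  · exact iff_of_false (not_mem_LW_of_wDom wDom_X_Y (Or.inl rfl)) (by rintro ⟨⟩)
  · exact iff_of_false (fun h => by rcases h.1 with h | h <;> cases h) (by rintro ⟨⟩)
  · exact iff_of_true (MLW_le_LW _ (A_mem_MLW (Or.inl rfl) (Or.inl rfl))) (Or.inl rfl)
  · exact iff_of_true (MLW_le_LW _ (B_mem_MLW (Or.inr (Or.inl rfl)) (Or.inr rfl)))
      (Or.inr (Or.inl rfl))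
  · exact iff_of_true (C_mem_LW (Or.inr (Or.inr rfl)) (Or.inl rfl) (Or.inr rfl))
      (Or.inr (Or.inr rfl))
  · exact iff_of_false (fun h => by rcases h.1 with h | h | h <;> cases h)
      (by rintro (h | h | h) <;> cases h)

theorem LW_GLW2 : LW pay16 GLW2 = GL16 := by
  funext b
  cases b <;> ext s <;> fin_cases s
  · exact iff_of_true (mem_LW_of_subsingleton rfl Set.subsingleton_singleton) rfl
  · exact iff_of_false (fun h => by cases h.1) (by rintro ⟨⟩)
  · exact iff_of_false (fun h => by cases h.1) (by rintro ⟨⟩)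
  · exact iff_of_true (MLW_le_LW _ (A_mem_MLW (Or.inl rfl) rfl)) rfl
  · exact iff_of_false (not_mem_LW_of_wDom wDom_A_B (Or.inl rfl)) (by rintro ⟨⟩)
  · exact iff_of_false (not_mem_LW_of_wDom wDom_A_C (Or.inl rfl)) (by rintro ⟨⟩)
  · exact iff_of_false (fun h => by rcases h.1 with h | h | h <;> cases h) (by rintro ⟨⟩)

end Example

/-- In the game above, MLW^ω = ({A,B},{X,Y}) and LW^ω = ({A},{X}), so the
inclusion MLW^ω ⊆ LW^ω fails. -/
theorem MLW_omega_not_subset_LW_omega :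
    (⨅ k : ℕ, (MLW pay16)^[k] ⊤) = GM16 ∧
    (⨅ k : ℕ, (LW pay16)^[k] ⊤) = GL16 ∧
    ¬ (⨅ k : ℕ, (MLW pay16)^[k] ⊤) ≤ ⨅ k : ℕ, (LW pay16)^[k] ⊤ := by
  have hMLW : (⨅ k : ℕ, (MLW pay16)^[k] ⊤) = GM16 :=
    iInf_iterate_top_eq_of_isFixedPt MLW_le_id (n := 1) MLW_top MLW_GM16
  have hLW : (⨅ k : ℕ, (LW pay16)^[k] ⊤) = GL16 := by
    refine iInf_iterate_top_eq_of_isFixedPt LW_le_id (n := 3) ?_ ?_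
    · simp only [iterate_succ_apply', iterate_zero_apply, LW_top, LW_GLW1, LW_GLW2]
    · exact LW_eq_self_of_subsingleton fun b => by cases b <;> exact Set.subsingleton_singleton
  refine ⟨hMLW, hLW, fun h => ?_⟩
  rw [hMLW, hLW] at h
  have hB : (1 : Fin 4) ∈ GL16 true := h true (Or.inr rfl)
  cases hB
end
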